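/- Let $n$ be a normalizer of $D(E)$ in $A_R(G_E)$ over an integral domain $R$. Then $\alpha_n$ is a homeomorphism from $\operatorname{dom}(n) = \operatorname{supp}(n^*n)$ onto $\operatorname{ran}(n) = \operatorname{supp}(nn^*) = \operatorname{dom}(n^*)$, with inverse $\alpha_{n^*}$. -/

import Mathlib

open scoped Classical BigOperators

namespace LPA

structure DirGraph where
  V : Type
  E : Type
  r : E → V
  s : E → V

structure InfPath (G : DirGraph) where
  edges : ℕ → G.E
  compat : ∀ i, G.s (edges i) = G.r (edges (i + 1))

structure FinPath (G : DirGraph) where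
  len : ℕ
  vtx : G.V
  edges : ℕ → G.E
  compat : ∀ i, i + 1 < len → G.s (edges i) = G.r (edges (i + 1))
  vtx_eq : 0 < len → vtx = G.r (edges 0)

variable {G : DirGraph}

/-- The source vertex of a finite path (its `vtx` if it has length `0`). -/
def FinPath.src (μ : FinPath G) : G.V :=
  if μ.len = 0 then μ.vtx else G.s (μ.edges (μ.len - 1))

/-- The range vertex of an infinite path. -/
def InfPath.rng (x : InfPath G) : G.V := G.r (x.edges 0)

/-- `x ∼ₖ y`: shift equivalence with lag `k`. -/
def ShiftEquiv (x : InfPath G) (k : ℤ) (y : InfPath G) : Prop :=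
  ∃ a b N : ℕ, (a : ℤ) - (b : ℤ) = k ∧ ∀ i, N ≤ i → x.edges (i + a) = y.edges (i + b)

def RowFinite (G : DirGraph) : Prop := ∀ v : G.V, {e : G.E | G.r e = v}.Finite

def NoSources (G : DirGraph) : Prop := ∀ v : G.V, ∃ e : G.E, G.r e = v

/-- `x = μ z`: the infinite path `x` is the concatenation of the finite path `μ`
with the infinite path `z`. -/
def IsConcat (μ : FinPath G) (z x : InfPath G) : Prop :=
  z.rng = μ.src ∧ ∀ i, x.edges i = if i < μ.len then μ.edges i else z.edges (i - μ.len)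

/-- `ρ = μ β`: concatenation of finite paths. -/
def IsAppendF (μ β ρ : FinPath G) : Prop :=
  ρ.len = μ.len + β.len ∧ (∀ i < μ.len, ρ.edges i = μ.edges i) ∧
    (∀ i < β.len, ρ.edges (μ.len + i) = β.edges i) ∧
    ρ.vtx = if μ.len = 0 then β.vtx else μ.vtx

/-- Triples `(x, k, y)`: the ambient type of the graph groupoid. -/
abbrev GTrip (G : DirGraph) := InfPath G × ℤ × InfPath G

def gmul (g h : GTrip G) : GTrip G := (g.1, g.2.1 + h.2.1, h.2.2)
def ginv (g : GTrip G) : GTrip G := (g.2.2, -g.2.1, g.1)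
def unit (x : InfPath G) : GTrip G := (x, 0, x)

def GraphGroupoid (G : DirGraph) : Set (GTrip G) :=
  {g | ShiftEquiv g.1 g.2.1 g.2.2}

/-- `BC` for subsets of the groupoid. -/
def setMul (B C : Set (GTrip G)) : Set (GTrip G) :=
  {g | ∃ γ ∈ B, ∃ η ∈ C, γ.2.2 = η.1 ∧ g = gmul γ η}

def setInv (B : Set (GTrip G)) : Set (GTrip G) := ginv '' B

/-- The cylinder set `Z(μ)` of infinite paths extending `μ`. -/
def Zset (μ : FinPath G) : Set (InfPath G) :=
  {x | (∀ i < μ.len, x.edges i = μ.edges i) ∧ x.rng = μ.vtx}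

/-- The basic compact open bisection `Z(μ,ν) = {(μz, |μ|-|ν|, νz)}`. -/
def ZZ (μ ν : FinPath G) : Set (GTrip G) :=
  {g | ∃ z : InfPath G, IsConcat μ z g.1 ∧ IsConcat ν z g.2.2 ∧
    g.2.1 = (μ.len : ℤ) - (ν.len : ℤ)}

instance : TopologicalSpace (InfPath G) :=
  TopologicalSpace.generateFrom {S | ∃ μ : FinPath G, S = Zset μ}

def unitSet (S : Set (InfPath G)) : Set (GTrip G) := {g | ∃ x ∈ S, g = unit x}

variable (R : Type) [CommRing R]

/-- The diagonal `D(E)` of the Steinberg algebra. -/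
noncomputable def Diag (G : DirGraph) : Submodule R (GTrip G → R) :=
  Submodule.span R {f | ∃ μ : FinPath G, f = Set.indicator (unitSet (Zset μ)) 1}

/-- The Steinberg algebra `A_R(G_E)` as a set of functions on the groupoid. -/
noncomputable def Steinberg (G : DirGraph) : Submodule R (GTrip G → R) :=
  Submodule.span R
    {f | ∃ μ ν : FinPath G, μ.src = ν.src ∧ f = Set.indicator (ZZ μ ν) 1}

variable {R}

/-- Convolution product. -/
noncomputable def conv (f g : GTrip G → R) : GTrip G → R :=
  fun γ => ∑ᶠ η ∈ {η : GTrip G | η.1 = γ.1}, f η * g (gmul (ginv η) γ)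

/-- Involution `f^*(γ) = star (f (γ⁻¹))`. -/
def starf [StarRing R] (f : GTrip G → R) : GTrip G → R :=
  fun γ => star (f (ginv γ))

/-- `n` is a normalizer of the diagonal. -/
def IsNormalizer [StarRing R] (n : GTrip G → R) : Prop :=
  n ∈ Steinberg R G ∧ ∀ d ∈ Diag R G,
    conv (conv n d) (starf n) ∈ Diag R G ∧ conv (conv (starf n) d) n ∈ Diag R G

/-- `α_n(x) = r(supp(n) x)` (given by a choice; unique for normalizers). -/
noncomputable def alphaFun (n : GTrip G → R) (x : InfPath G) : InfPath G :=
  if h : ∃ g : GTrip G, n g ≠ 0 ∧ g.2.2 = x then h.choose.1 else x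

/-- `dom(n) = supp(n^* n)`, as a subset of the infinite path space. -/
noncomputable def domSet [StarRing R] (n : GTrip G → R) : Set (InfPath G) :=
  {x | conv (starf n) n (unit x) ≠ 0}

/-- `ran(n) = supp(n n^*)`, as a subset of the infinite path space. -/
noncomputable def ranSet [StarRing R] (n : GTrip G → R) : Set (InfPath G) :=
  {x | conv n (starf n) (unit x) ≠ 0}

/-- `d ∘ α_n`, viewed as a function on the groupoid vanishing off `s(supp n)`. -/
noncomputable def dAlpha (d n : GTrip G → R) : GTrip G → R := fun g =>
  if (g.2.1 = 0 ∧ g.1 = g.2.2 ∧ ∃ h : GTrip G, n h ≠ 0 ∧ h.2.2 = g.2.2)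
  then d (unit (alphaFun n g.2.2)) else 0

/-- `p_x`, the characteristic function of the unit `{x}`. -/
noncomputable def ppt (R : Type) [CommRing R] (x : InfPath G) : GTrip G → R :=
  Set.indicator {unit x} 1

/-- `f` is homogeneous of degree `k`. -/
def Homog (k : ℤ) (f : GTrip G → R) : Prop := ∀ g : GTrip G, f g ≠ 0 → g.2.1 = k

def IsCycle (η : FinPath G) : Prop :=
  0 < η.len ∧ η.src = η.vtx ∧
    ∀ i j, 0 < i → i + 1 < η.len → 0 < j → j + 1 < η.len → i ≠ j →
      G.s (η.edges i) ≠ G.r (η.edges j)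

def HasEntrance (η : FinPath G) : Prop :=
  ∃ (e : G.E) (i : ℕ), i < η.len ∧ G.r e = G.r (η.edges i) ∧ e ≠ η.edges i

/-- `z = η η η ⋯`. -/
def IsPeriodicOf (η : FinPath G) (z : InfPath G) : Prop :=
  ∀ i, z.edges i = η.edges (i % η.len)

end LPA

/-! Write `n = ∑ cᵢ 1_{Z(μᵢ,νᵢ)}`. Such an `n` is locally constant along sources: moving the
source `x` of a point of `supp n` inside a small cylinder around `x` moves the point along,
keeping its value, its degree and the beginning of its range.

The heart of the argument is that `supp n` meets each source fibre at most once. Otherwise take,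
among the finitely many points of `supp n` over `x`, a point `g` of largest and a point `h` of
smallest degree, `g ≠ h`, and let `d ∈ D(E)` be the indicator of a small cylinder around `x`.
Extremality of the degrees and local constancy kill every contribution to `(n d n^*)(g h⁻¹)` but
`n(g) n(h)^*`, which is nonzero as `R` is a domain; yet `g h⁻¹` is not a unit, whereas
`n d n^* ∈ D(E)` is supported on units. Applied to `n^*` as well, this makes `supp n` a bisection,
so `α_n = r ∘ s⁻¹` and `α_{n^*} = s ∘ r⁻¹` on it are mutually inverse between
`s(supp n) = dom(n)` and `r(supp n) = ran(n)`, and continuity is local constancy once more. -/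

open Filter Topology

theorem Set.Finite.exists_ne_min_max_image {α β : Type*} [LinearOrder β] {s : Set α}
    (hs : s.Finite) (f : α → β) {a b : α} (ha : a ∈ s) (hb : b ∈ s) (hab : a ≠ b) :
    ∃ a₀ ∈ s, ∃ b₀ ∈ s, a₀ ≠ b₀ ∧ ∀ c ∈ s, f b₀ ≤ f c ∧ f c ≤ f a₀ := by
  obtain ⟨a₀, ha₀, hmax⟩ := s.exists_max_image f hs ⟨a, ha⟩
  obtain ⟨b₀, hb₀, hmin⟩ := s.exists_min_image f hs ⟨a, ha⟩
  by_cases h : a₀ = b₀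
  · subst h
    exact ⟨a, ha, b, hb, hab, fun c hc => ⟨(hmax b hb).trans (hmin c hc),
      (hmax c hc).trans (hmin a ha)⟩⟩
  · exact ⟨a₀, ha₀, b₀, hb₀, h, fun c hc => ⟨hmin c hc, hmax c hc⟩⟩

theorem finsum_mem_eq_single {α M : Type*} [AddCommMonoid M] {s : Set α} (f : α → M) {a : α}
    (ha : a ∈ s) (h : ∀ b ∈ s, b ≠ a → f b = 0) : ∑ᶠ i ∈ s, f i = f a := by
  rw [finsum_mem_def, finsum_eq_single _ a fun b hb => ?_, Set.indicator_of_mem ha]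
  by_cases hbs : b ∈ s
  · rw [Set.indicator_of_mem hbs, h b hbs hb]
  · exact Set.indicator_of_notMem hbs f

namespace LPA

variable {G : DirGraph}

@[ext] lemma InfPath.ext {x y : InfPath G} (h : x.edges = y.edges) : x = y := by
  cases x; cases y; simp_all

def InfPath.shift (x : InfPath G) (m : ℕ) : InfPath G :=
  ⟨fun i => x.edges (i + m), fun i => by simpa [Nat.add_right_comm] using x.compat (i + m)⟩

@[simp] lemma InfPath.shift_edges (x : InfPath G) (m i : ℕ) :
    (x.shift m).edges i = x.edges (i + m) := rfl

lemma InfPath.rng_shift (x : InfPath G) (m : ℕ) : (x.shift m).rng = G.r (x.edges m) := by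
  simp [InfPath.rng]

def FinPath.catEdges (μ : FinPath G) (z : InfPath G) (i : ℕ) : G.E :=
  if i < μ.len then μ.edges i else z.edges (i - μ.len)

lemma FinPath.catEdges_compat {μ : FinPath G} {z : InfPath G} (h : z.rng = μ.src) (i : ℕ) :
    G.s (μ.catEdges z i) = G.r (μ.catEdges z (i + 1)) := by
  unfold FinPath.catEdges
  rcases lt_trichotomy (i + 1) μ.len with hi | hi | hi
  · rw [if_pos (by omega), if_pos hi]; exact μ.compat i hi
  · have hsrc : μ.src = G.s (μ.edges i) := by
      unfold FinPath.src; rw [if_neg (by omega), show μ.len - 1 = i by omega]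
    rw [if_pos (by omega), if_neg (by omega), show i + 1 - μ.len = 0 by omega, ← hsrc, ← h]
    rfl
  · rw [if_neg (by omega), if_neg (by omega), show i + 1 - μ.len = i - μ.len + 1 by omega]
    exact z.compat (i - μ.len)

noncomputable def FinPath.concat (μ : FinPath G) (z : InfPath G) : InfPath G :=
  if h : z.rng = μ.src then ⟨μ.catEdges z, FinPath.catEdges_compat h⟩ else z

lemma FinPath.concat_edges {μ : FinPath G} {z : InfPath G} (h : z.rng = μ.src) :
    (μ.concat z).edges = μ.catEdges z := by
  rw [FinPath.concat, dif_pos h]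

lemma isConcat_iff {μ : FinPath G} {z x : InfPath G} :
    IsConcat μ z x ↔ z.rng = μ.src ∧ x = μ.concat z := by
  constructor
  · rintro ⟨hz, hx⟩
    refine ⟨hz, InfPath.ext ?_⟩
    rw [FinPath.concat_edges hz]
    exact funext hx
  · rintro ⟨hz, rfl⟩
    exact ⟨hz, fun i => by rw [FinPath.concat_edges hz]; rfl⟩

def InfPath.take (x : InfPath G) (M : ℕ) : FinPath G :=
  ⟨M, x.rng, x.edges, fun i _ => x.compat i, fun _ => rfl⟩

lemma InfPath.mem_Zset_take {x x' : InfPath G} {M : ℕ} :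
    x' ∈ Zset (x.take M) ↔ (∀ i < M, x'.edges i = x.edges i) ∧ x'.rng = x.rng :=
  Iff.rfl

lemma InfPath.mem_Zset_take_self (x : InfPath G) (M : ℕ) : x ∈ Zset (x.take M) :=
  ⟨fun _ _ => rfl, rfl⟩

lemma isOpen_Zset (μ : FinPath G) : IsOpen (Zset μ) :=
  TopologicalSpace.isOpen_generateFrom_of_mem ⟨μ, rfl⟩

lemma InfPath.exists_Zset_take_subset {S : Set (InfPath G)} (hS : IsOpen S) :
    ∀ y ∈ S, ∃ M : ℕ, Zset (y.take M) ⊆ S := by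
  induction hS with
  | basic U hU =>
    obtain ⟨μ, rfl⟩ := hU
    intro y hy
    refine ⟨μ.len, fun x' hx' => ?_⟩
    exact ⟨fun i hi => (hx'.1 i hi).trans (hy.1 i hi), hx'.2.trans hy.2⟩
  | univ => exact fun y _ => ⟨0, Set.subset_univ _⟩
  | inter U V _ _ ihU ihV =>
    intro y hy
    obtain ⟨M₁, h₁⟩ := ihU y hy.1
    obtain ⟨M₂, h₂⟩ := ihV y hy.2
    exact ⟨max M₁ M₂, fun x' hx' =>
      ⟨h₁ ⟨fun i hi => hx'.1 i (lt_max_of_lt_left hi), hx'.2⟩,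
        h₂ ⟨fun i hi => hx'.1 i (lt_max_of_lt_right hi), hx'.2⟩⟩⟩
  | sUnion T _ ih =>
    rintro y ⟨U, hU, hyU⟩
    obtain ⟨M, hM⟩ := ih U hU y hyU
    exact ⟨M, hM.trans (Set.subset_sUnion_of_mem hU)⟩

lemma InfPath.nhds_basis_Zset_take (y : InfPath G) :
    (𝓝 y).HasBasis (fun _ : ℕ => True) (fun M => Zset (y.take M)) := by
  refine ⟨fun S => ⟨fun hS => ?_, fun ⟨M, _, hM⟩ => ?_⟩⟩
  · obtain ⟨U, hUS, hU, hyU⟩ := mem_nhds_iff.mp hS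
    obtain ⟨M, hM⟩ := InfPath.exists_Zset_take_subset hU y hyU
    exact ⟨M, trivial, hM.trans hUS⟩
  · exact mem_of_superset ((isOpen_Zset _).mem_nhds (y.mem_Zset_take_self M)) hM

@[simp] lemma ginv_ginv (γ : GTrip G) : ginv (ginv γ) = γ := by
  simp [ginv]

lemma ginv_mem_ZZ {μ ν : FinPath G} {γ : GTrip G} : ginv γ ∈ ZZ μ ν ↔ γ ∈ ZZ ν μ := by
  show (∃ z, IsConcat μ z γ.2.2 ∧ IsConcat ν z γ.1 ∧ -γ.2.1 = (μ.len : ℤ) - ν.len) ↔ _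
  constructor <;> rintro ⟨z, h₁, h₂, h₃⟩ <;> exact ⟨z, h₂, h₁, by omega⟩

/-- `s(Z(μ, ν))`. -/
def ZZSrc (μ ν : FinPath G) : Set (InfPath G) :=
  {x | IsConcat ν (x.shift ν.len) x ∧ (x.shift ν.len).rng = μ.src}

lemma mem_ZZSrc_iff {μ ν : FinPath G} {x : InfPath G} :
    x ∈ ZZSrc μ ν ↔ (∀ i < ν.len, x.edges i = ν.edges i) ∧
      G.r (x.edges ν.len) = ν.src ∧ G.r (x.edges ν.len) = μ.src := by
  simp only [ZZSrc, IsConcat, Set.mem_ofPred_eq, InfPath.rng_shift]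
  constructor
  · rintro ⟨⟨hν, hx⟩, hμ⟩
    exact ⟨fun i hi => by rw [hx i, if_pos hi], hν, hμ⟩
  · rintro ⟨hx, hν, hμ⟩
    refine ⟨⟨hν, fun i => ?_⟩, hμ⟩
    split_ifs with hi
    · exact hx i hi
    · rw [InfPath.shift_edges, Nat.sub_add_cancel (not_lt.mp hi)]

/-- The point of `Z(μ, ν)` with source `x`, provided `x ∈ ZZSrc μ ν`. -/
noncomputable def zzLift (μ ν : FinPath G) (x : InfPath G) : GTrip G :=
  (μ.concat (x.shift ν.len), (μ.len : ℤ) - (ν.len : ℤ), x)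

@[simp] lemma zzLift_snd_snd (μ ν : FinPath G) (x : InfPath G) : (zzLift μ ν x).2.2 = x := rfl

lemma mem_ZZ_iff {μ ν : FinPath G} {γ : GTrip G} :
    γ ∈ ZZ μ ν ↔ γ.2.2 ∈ ZZSrc μ ν ∧ γ = zzLift μ ν γ.2.2 := by
  constructor
  · rintro ⟨z, hμ, hν, hk⟩
    have hz : z = γ.2.2.shift ν.len := by
      ext i
      simpa using (hν.2 (i + ν.len)).symm
    subst hz
    exact ⟨⟨hν, hμ.1⟩, Prod.ext (isConcat_iff.mp hμ).2 (Prod.ext hk rfl)⟩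
  · rintro ⟨⟨hν, hμ⟩, hγ⟩
    exact ⟨γ.2.2.shift ν.len, isConcat_iff.mpr ⟨hμ, congrArg Prod.fst hγ⟩, hν,
      congrArg (fun t => t.2.1) hγ⟩

lemma zzLift_fst_edges {μ ν : FinPath G} {x : InfPath G} (hx : x ∈ ZZSrc μ ν) (t : ℕ) :
    (zzLift μ ν x).1.edges t =
      if t < μ.len then μ.edges t else x.edges (t - μ.len + ν.len) := by
  simp only [zzLift, FinPath.concat_edges hx.2, FinPath.catEdges, InfPath.shift_edges]

lemma zzLift_eq_zzLift_iff {μ₁ ν₁ μ₂ ν₂ : FinPath G} {x : InfPath G} :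
    zzLift μ₁ ν₁ x = zzLift μ₂ ν₂ x ↔
      (zzLift μ₁ ν₁ x).1 = (zzLift μ₂ ν₂ x).1 ∧ μ₁.len + ν₂.len = μ₂.len + ν₁.len := by
  simp only [zzLift, Prod.mk.injEq, and_true]
  exact and_congr_right' ⟨fun h => by omega, fun h => by omega⟩

section Agree

variable {N : ℕ} {x x' : InfPath G}

lemma mem_ZZSrc_congr (hagree : ∀ t < N, x'.edges t = x.edges t) {μ ν : FinPath G}
    (hν : ν.len < N) : x' ∈ ZZSrc μ ν ↔ x ∈ ZZSrc μ ν := by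
  simp only [mem_ZZSrc_iff, hagree ν.len hν]
  exact and_congr_left' (forall₂_congr fun i hi => by rw [hagree i (by omega)])

lemma zzLift_fst_eq_of_agree (hagree : ∀ t < N, x'.edges t = x.edges t)
    {μ₁ ν₁ μ₂ ν₂ : FinPath G} (hN : μ₁.len + ν₂.len ≤ N)
    (hx₁ : x ∈ ZZSrc μ₁ ν₁) (hx₂ : x ∈ ZZSrc μ₂ ν₂)
    (hx₁' : x' ∈ ZZSrc μ₁ ν₁) (hx₂' : x' ∈ ZZSrc μ₂ ν₂)
    (hk : μ₁.len + ν₂.len = μ₂.len + ν₁.len)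
    (h : (zzLift μ₁ ν₁ x).1 = (zzLift μ₂ ν₂ x).1) :
    (zzLift μ₁ ν₁ x').1 = (zzLift μ₂ ν₂ x').1 := by
  ext t
  have ht := congrArg (·.edges t) h
  simp only [zzLift_fst_edges hx₁, zzLift_fst_edges hx₂] at ht
  rw [zzLift_fst_edges hx₁', zzLift_fst_edges hx₂']
  split_ifs at ht ⊢ with c₁ c₂ c₂
  · exact ht
  · rwa [hagree _ (by omega)]
  · rwa [hagree _ (by omega)]
  · congr 1; omega

lemma eq_of_zzLift_fst_eq (hagree : ∀ t < N, x'.edges t = x.edges t)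
    {μ₁ ν₁ μ₂ ν₂ : FinPath G} (hx₁' : x' ∈ ZZSrc μ₁ ν₁) (hx₂ : x ∈ ZZSrc μ₂ ν₂)
    (hk : μ₁.len + ν₂.len = μ₂.len + ν₁.len) (hN : μ₁.len + ν₂.len < N)
    (h : (zzLift μ₁ ν₁ x').1 = (zzLift μ₂ ν₂ x).1) : x' = x := by
  ext t
  by_cases ht : t < N
  · exact hagree t ht
  · have hs := congrArg (·.edges (t - ν₁.len + μ₁.len)) h
    simp only [zzLift_fst_edges hx₁', zzLift_fst_edges hx₂] at hs
    rwa [if_neg (by omega), if_neg (by omega), show t - ν₁.len + μ₁.len - μ₁.len + ν₁.len = t by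
      omega, show t - ν₁.len + μ₁.len - μ₂.len + ν₂.len = t by omega] at hs

lemma zzLift_mem_ZZ_congr (hagree : ∀ t < N, x'.edges t = x.edges t)
    {μ₁ ν₁ μ₂ ν₂ : FinPath G} (hN : μ₁.len + ν₂.len < N)
    (hx₁ : x ∈ ZZSrc μ₁ ν₁) (hx₁' : x' ∈ ZZSrc μ₁ ν₁) :
    zzLift μ₁ ν₁ x' ∈ ZZ μ₂ ν₂ ↔ zzLift μ₁ ν₁ x ∈ ZZ μ₂ ν₂ := by
  simp only [mem_ZZ_iff, zzLift_snd_snd, zzLift_eq_zzLift_iff]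
  rw [mem_ZZSrc_congr hagree (by omega)]
  refine and_congr_right fun hx₂ => and_congr_left fun hk => ?_
  have hx₂' := (mem_ZZSrc_congr hagree (by omega)).mpr hx₂
  exact ⟨zzLift_fst_eq_of_agree (fun t ht => (hagree t ht).symm) hN.le hx₁' hx₂' hx₁ hx₂ hk,
    zzLift_fst_eq_of_agree hagree hN.le hx₁ hx₂ hx₁' hx₂' hk⟩

end Agree

section CommRing

variable {R : Type} [CommRing R]

section Steinberg

def IsZZSum (n : GTrip G → R) {m : ℕ} (c : Fin m → R) (p q : Fin m → FinPath G) : Prop :=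
  ∀ γ, n γ = ∑ i, c i * if γ ∈ ZZ (p i) (q i) then 1 else 0

lemma exists_sum_indicator_ZZ_of_mem_Steinberg {n : GTrip G → R} (h : n ∈ Steinberg R G) :
    ∃ (m : ℕ) (c : Fin m → R) (p q : Fin m → FinPath G), (∀ i, (p i).src = (q i).src) ∧
      IsZZSum n c p q := by
  rw [Steinberg, Submodule.mem_span_set'] at h
  obtain ⟨m, c, f, hsum⟩ := h
  choose p q hsrc hf using fun i => (f i).2
  refine ⟨m, c, p, q, hsrc, fun γ => ?_⟩
  rw [← congrFun hsum γ, Finset.sum_apply]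
  refine Finset.sum_congr rfl fun i _ => ?_
  rw [Pi.smul_apply, smul_eq_mul, hf i, Set.indicator_apply]
  rfl

lemma exists_len_add_len_lt {m : ℕ} (p q : Fin m → FinPath G) :
    ∃ N, ∀ i j, (q i).len + (p j).len < N := by
  obtain ⟨M, hM⟩ := Finite.exists_le fun i => (q i).len + (p i).len
  exact ⟨2 * M + 1, fun i j => by have := hM i; have := hM j; omega⟩

variable {n : GTrip G → R} {m : ℕ} {c : Fin m → R} {p q : Fin m → FinPath G} {N : ℕ}

lemma exists_eq_zzLift_of_ne_zero
    (hrep : IsZZSum n c p q)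
    {γ : GTrip G} (hγ : n γ ≠ 0) :
    ∃ i, γ.2.2 ∈ ZZSrc (p i) (q i) ∧ γ = zzLift (p i) (q i) γ.2.2 := by
  by_contra! h
  exact hγ (by
    rw [hrep]
    exact Finset.sum_eq_zero fun i _ => by
      rw [if_neg fun hi => h i (mem_ZZ_iff.mp hi).1 (mem_ZZ_iff.mp hi).2, mul_zero])

lemma finite_support_fibre
    (hrep : IsZZSum n c p q) (x : InfPath G) :
    {γ | n γ ≠ 0 ∧ γ.2.2 = x}.Finite := by
  refine (Set.finite_range fun i => zzLift (p i) (q i) x).subset ?_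
  rintro γ ⟨hγ, rfl⟩
  obtain ⟨i, -, hγi⟩ := exists_eq_zzLift_of_ne_zero hrep hγ
  exact ⟨i, hγi.symm⟩

lemma apply_zzLift_congr
    (hrep : IsZZSum n c p q)
    (hN : ∀ i j, (q i).len + (p j).len < N) {x x' : InfPath G}
    (hagree : ∀ t < N, x'.edges t = x.edges t) {i : Fin m} (hx : x ∈ ZZSrc (p i) (q i)) :
    n (zzLift (p i) (q i) x') = n (zzLift (p i) (q i) x) := by
  have hx' := (mem_ZZSrc_congr hagree (by have := hN i i; omega)).mpr hx
  rw [hrep, hrep]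
  refine Finset.sum_congr rfl fun j _ => ?_
  rw [if_congr (zzLift_mem_ZZ_congr hagree (by have := hN j i; omega) hx hx') rfl rfl]

lemma exists_support_transport
    (hrep : IsZZSum n c p q)
    (hN : ∀ i j, (q i).len + (p j).len < N) {γ : GTrip G} (hγ : n γ ≠ 0)
    {x' : InfPath G} {M : ℕ} (hagree : ∀ t < N + M, x'.edges t = γ.2.2.edges t) :
    ∃ γ', n γ' ≠ 0 ∧ γ'.2.2 = x' ∧ γ'.2.1 = γ.2.1 ∧ ∀ t < M, γ'.1.edges t = γ.1.edges t := by
  obtain ⟨i, hx, hγi⟩ := exists_eq_zzLift_of_ne_zero hrep hγ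
  have hagreeN : ∀ t < N, x'.edges t = γ.2.2.edges t := fun t ht => hagree t (by omega)
  have hx' := (mem_ZZSrc_congr hagreeN (by have := hN i i; omega)).mpr hx
  refine ⟨zzLift (p i) (q i) x', ?_, rfl, (congrArg (·.2.1) hγi).symm, fun t ht => ?_⟩
  · rwa [apply_zzLift_congr hrep hN hagreeN hx, ← hγi]
  · rw [hγi, zzLift_fst_edges hx, zzLift_fst_edges hx']
    split_ifs
    · rfl
    · exact hagree _ (by have := hN i i; omega)

lemma eq_of_fst_eq_of_agree
    (hrep : IsZZSum n c p q)
    (hN : ∀ i j, (q i).len + (p j).len < N) {γ γ' : GTrip G} (hγ : n γ ≠ 0) (hγ' : n γ' ≠ 0)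
    (h₁ : γ.1 = γ'.1) (h₂ : γ.2.1 = γ'.2.1) (hagree : ∀ t < N, γ.2.2.edges t = γ'.2.2.edges t) :
    γ = γ' := by
  obtain ⟨i, hx, hγi⟩ := exists_eq_zzLift_of_ne_zero hrep hγ
  obtain ⟨j, hx', hγj⟩ := exists_eq_zzLift_of_ne_zero hrep hγ'
  have hk : (p i).len + (q j).len = (p j).len + (q i).len := by
    have hi := congrArg (·.2.1) hγi
    have hj := congrArg (·.2.1) hγj
    simp only [zzLift] at hi hj
    omega
  have hfst : (zzLift (p i) (q i) γ.2.2).1 = (zzLift (p j) (q j) γ'.2.2).1 := by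
    rw [← hγi, ← hγj]
    exact h₁
  have hsrc := eq_of_zzLift_fst_eq hagree hx hx' hk (by have := hN j i; omega) hfst
  exact Prod.ext h₁ (Prod.ext h₂ hsrc)

end Steinberg

lemma conv_apply (f g : GTrip G → R) (γ : GTrip G) :
    conv f g γ = ∑ᶠ η ∈ {η : GTrip G | η.1 = γ.1}, f η * g (gmul (ginv η) γ) := rfl

lemma conv_indicator_unitSet_apply (n : GTrip G → R) (S : Set (InfPath G)) (η : GTrip G) :
    conv n (Set.indicator (unitSet S) 1) η = if η.2.2 ∈ S then n η else 0 := by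
  rw [conv_apply, finsum_mem_eq_single _ (show η ∈ {η' : GTrip G | η'.1 = η.1} from rfl)]
  · have hunit : gmul (ginv η) η = unit η.2.2 := by simp [gmul, ginv, unit]
    rw [hunit]
    split_ifs with hS
    · rw [Set.indicator_of_mem (show unit η.2.2 ∈ unitSet S from ⟨_, hS, rfl⟩), Pi.one_apply,
        mul_one]
    · rw [Set.indicator_of_notMem, mul_zero]
      rintro ⟨w, hw, hwe⟩
      exact hS (by rwa [show η.2.2 = w from congrArg Prod.fst hwe])
  · intro b hb hne
    rw [Set.indicator_of_notMem, mul_zero]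
    rintro ⟨w, -, hwe⟩
    simp only [gmul, ginv, unit, Prod.mk.injEq] at hwe
    exact hne (Prod.ext hb (Prod.ext (by omega) (hwe.1.trans hwe.2.2.symm)))

lemma eq_zero_of_mem_Diag {f : GTrip G → R} (hf : f ∈ Diag R G) {γ : GTrip G}
    (hγ : ∀ w : InfPath G, γ ≠ unit w) : f γ = 0 := by
  induction hf using Submodule.span_induction with
  | mem f hf =>
    obtain ⟨μ, rfl⟩ := hf
    exact Set.indicator_of_notMem (s := unitSet (Zset μ)) (fun ⟨w, _, hw⟩ => hγ w hw) _
  | zero => rfl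
  | add f g _ _ hf hg => rw [Pi.add_apply, hf, hg, add_zero]
  | smul c f _ hf => rw [Pi.smul_apply, hf, smul_zero]

section Star

variable [StarRing R] {n : GTrip G → R}

lemma starf_starf (n : GTrip G → R) : starf (starf n) = n := by
  funext γ
  show star (star (n (ginv (ginv γ)))) = n γ
  rw [ginv_ginv, star_star]

lemma starf_ne_zero_iff {γ : GTrip G} : starf n γ ≠ 0 ↔ n (ginv γ) ≠ 0 :=
  star_ne_zero

lemma starf_mem_Steinberg (h : n ∈ Steinberg R G) : starf n ∈ Steinberg R G := by
  obtain ⟨m, c, p, q, hsrc, hrep⟩ := exists_sum_indicator_ZZ_of_mem_Steinberg h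
  have hstar : starf n = ∑ i, star (c i) • Set.indicator (ZZ (q i) (p i)) (1 : GTrip G → R) := by
    funext γ
    rw [Finset.sum_apply, starf, hrep, star_sum]
    refine Finset.sum_congr rfl fun i _ => ?_
    rw [star_mul', Pi.smul_apply, smul_eq_mul, Set.indicator_apply, Pi.one_apply,
      if_congr ginv_mem_ZZ rfl rfl]
    split_ifs <;> simp
  rw [hstar]
  exact Submodule.sum_mem _ fun i _ =>
    Submodule.smul_mem _ _ (Submodule.subset_span ⟨q i, p i, (hsrc i).symm, rfl⟩)

lemma IsNormalizer.starf (hn : IsNormalizer n) : IsNormalizer (starf n) := by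
  refine ⟨starf_mem_Steinberg hn.1, fun d hd => ?_⟩
  rw [starf_starf]
  exact (hn.2 d hd).symm

lemma ranSet_eq_domSet_starf (n : GTrip G → R) : ranSet n = domSet (starf n) := by
  rw [domSet, starf_starf]
  rfl

end Star

end CommRing

section Domain

variable {R : Type} [CommRing R] [IsDomain R] [StarRing R] {n : GTrip G → R}

lemma conv_conv_starf_apply_of_extremal {m : ℕ} {c : Fin m → R} {p q : Fin m → FinPath G}
    {N : ℕ} (hrep : IsZZSum n c p q)
    (hN : ∀ i j, (q i).len + (p j).len < N) {x : InfPath G} {g h : GTrip G}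
    (hg : n g ≠ 0) (hgx : g.2.2 = x) (hhx : h.2.2 = x)
    (hext : ∀ γ, n γ ≠ 0 → γ.2.2 = x → h.2.1 ≤ γ.2.1 ∧ γ.2.1 ≤ g.2.1) :
    conv (conv n (Set.indicator (unitSet (Zset (x.take N))) 1)) (starf n)
      (g.1, g.2.1 - h.2.1, h.1) = n g * star (n h) := by
  set γ₀ : GTrip G := (g.1, g.2.1 - h.2.1, h.1)
  rw [conv_apply, finsum_mem_eq_single _ (show g ∈ {η : GTrip G | η.1 = γ₀.1} from rfl)]
  · have hh : ginv (gmul (ginv g) γ₀) = h :=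
      Prod.ext rfl (Prod.ext (by simp [γ₀, gmul, ginv]) (hgx.trans hhx.symm))
    rw [conv_indicator_unitSet_apply, if_pos (hgx ▸ x.mem_Zset_take_self N), starf, hh]
  · intro η hη hne
    by_contra hterm
    obtain ⟨hleft, hright⟩ := mul_ne_zero_iff.mp hterm
    rw [conv_indicator_unitSet_apply] at hleft
    obtain ⟨hηx, hnη⟩ := ite_ne_right_iff.mp hleft
    set h' := ginv (gmul (ginv η) γ₀) with hh'
    have hnh' : n h' ≠ 0 := starf_ne_zero_iff.mp hright
    have hdeg' : h'.2.1 = η.2.1 - (g.2.1 - h.2.1) := by simp only [hh', γ₀, gmul, ginv]; omega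
    -- Transporting `η` and `h'` into the fibre over `x` bounds their degrees by extremality.
    obtain ⟨γ₁, hγ₁, hγ₁x, hdeg₁, -⟩ :=
      exists_support_transport hrep hN hnη (M := 0) fun t ht => (hηx.1 t ht).symm
    obtain ⟨γ₂, hγ₂, hγ₂x, hdeg₂, -⟩ :=
      exists_support_transport hrep hN hnh' (M := 0) fun t ht => (hηx.1 t ht).symm
    have hdeg : η.2.1 = g.2.1 := by
      have := hext γ₁ hγ₁ hγ₁x
      have := hext γ₂ hγ₂ hγ₂x
      omega
    exact hne (eq_of_fst_eq_of_agree hrep hN hnη hg hη hdeg fun t ht => hgx ▸ hηx.1 t ht)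

theorem IsNormalizer.eq_of_snd_snd_eq (hn : IsNormalizer n) {g h : GTrip G}
    (hg : n g ≠ 0) (hh : n h ≠ 0) (hgh : g.2.2 = h.2.2) : g = h := by
  by_contra hne
  obtain ⟨m, c, p, q, -, hrep⟩ := exists_sum_indicator_ZZ_of_mem_Steinberg hn.1
  obtain ⟨N, hN⟩ := exists_len_add_len_lt p q
  obtain ⟨g₀, ⟨hg₀, hg₀x⟩, h₀, ⟨hh₀, hh₀x⟩, hne₀, hext⟩ :=
    (finite_support_fibre hrep g.2.2).exists_ne_min_max_image (·.2.1) ⟨hg, rfl⟩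
      ⟨hh, hgh.symm⟩ hne
  have hd : Set.indicator (unitSet (Zset (g.2.2.take N))) 1 ∈ Diag R G :=
    Submodule.subset_span ⟨_, rfl⟩
  have hnotUnit : ∀ w, ((g₀.1, g₀.2.1 - h₀.2.1, h₀.1) : GTrip G) ≠ unit w := by
    intro w hw
    simp only [unit, Prod.mk.injEq] at hw
    exact hne₀ (Prod.ext (hw.1.trans hw.2.2.symm) (Prod.ext (by omega) (hg₀x.trans hh₀x.symm)))
  have hzero := eq_zero_of_mem_Diag (hn.2 _ hd).1 hnotUnit
  rw [conv_conv_starf_apply_of_extremal hrep hN hg₀ hg₀x hh₀x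
    fun γ hγ hγx => hext γ ⟨hγ, hγx⟩] at hzero
  exact mul_ne_zero hg₀ (star_ne_zero.mpr hh₀) hzero

lemma mem_domSet_iff (hn : IsNormalizer n) {x : InfPath G} :
    x ∈ domSet n ↔ ∃ g, n g ≠ 0 ∧ g.2.2 = x := by
  constructor
  · intro hx
    by_contra! hno
    refine hx (finsum_mem_of_eqOn_zero fun η _ => ?_)
    by_contra hterm
    exact hno _ (right_ne_zero_of_mul hterm) rfl
  · rintro ⟨g, hg, rfl⟩
    refine (finsum_mem_eq_single _ (show ginv g ∈ {η : GTrip G | η.1 = (unit g.2.2).1} from rfl)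
      fun b hb hne => ?_).trans_ne ?_
    · have hb' : n (ginv b) = 0 := by
        by_contra hb'
        exact hne (by rw [← hn.eq_of_snd_snd_eq hb' hg hb, ginv_ginv])
      rw [starf, hb', star_zero, zero_mul]
    · have hg' : gmul (ginv (ginv g)) (unit g.2.2) = g := by simp [gmul, unit]
      rw [starf, hg', ginv_ginv]
      exact mul_ne_zero (star_ne_zero.mpr hg) hg

lemma mem_ranSet_iff (hn : IsNormalizer n) {y : InfPath G} :
    y ∈ ranSet n ↔ ∃ g, n g ≠ 0 ∧ g.1 = y := by
  rw [ranSet_eq_domSet_starf, mem_domSet_iff hn.starf]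
  constructor
  · rintro ⟨g, hg, rfl⟩
    exact ⟨ginv g, starf_ne_zero_iff.mp hg, rfl⟩
  · rintro ⟨g, hg, rfl⟩
    exact ⟨ginv g, by rwa [starf_ne_zero_iff, ginv_ginv], rfl⟩

lemma alphaFun_eq (hn : IsNormalizer n) {g : GTrip G} (hg : n g ≠ 0) :
    alphaFun n g.2.2 = g.1 := by
  have hex : ∃ γ : GTrip G, n γ ≠ 0 ∧ γ.2.2 = g.2.2 := ⟨g, hg, rfl⟩
  rw [alphaFun, dif_pos hex, hn.eq_of_snd_snd_eq hex.choose_spec.1 hg hex.choose_spec.2]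

lemma alphaFun_starf_eq (hn : IsNormalizer n) {g : GTrip G} (hg : n g ≠ 0) :
    alphaFun (starf n) g.1 = g.2.2 :=
  alphaFun_eq hn.starf (g := ginv g) (by rwa [starf_ne_zero_iff, ginv_ginv])

lemma IsNormalizer.continuousOn_alphaFun (hn : IsNormalizer n) :
    ContinuousOn (alphaFun n) (domSet n) := by
  intro x hx
  obtain ⟨g, hg, rfl⟩ := (mem_domSet_iff hn).mp hx
  obtain ⟨m, c, p, q, -, hrep⟩ := exists_sum_indicator_ZZ_of_mem_Steinberg hn.1
  obtain ⟨N, hN⟩ := exists_len_add_len_lt p q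
  rw [ContinuousWithinAt, alphaFun_eq hn hg, g.1.nhds_basis_Zset_take.tendsto_right_iff]
  intro M _
  filter_upwards [mem_nhdsWithin_of_mem_nhds
    ((isOpen_Zset _).mem_nhds (g.2.2.mem_Zset_take_self (N + (M + 1))))] with x' hx'
  obtain ⟨γ, hγ, rfl, -, hedges⟩ := exists_support_transport hrep hN hg hx'.1
  rw [alphaFun_eq hn hγ]
  exact InfPath.mem_Zset_take.mpr
    ⟨fun t ht => hedges t (by omega), congrArg G.r (hedges 0 (by omega))⟩

end Domain

end LPA

open LPA in
theorem alpha_homeo_general {G : DirGraph}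
    {R : Type} [CommRing R] [IsDomain R] [StarRing R]
    (n : GTrip G → R) (hn : IsNormalizer n) :
    Set.BijOn (alphaFun n) (domSet n) (ranSet n) ∧
      ranSet n = domSet (starf n) ∧
      ContinuousOn (alphaFun n) (domSet n) ∧
      ContinuousOn (alphaFun (starf n)) (ranSet n) ∧
      (∀ x ∈ domSet n, alphaFun (starf n) (alphaFun n x) = x) ∧
      (∀ y ∈ ranSet n, alphaFun n (alphaFun (starf n) y) = y) := by
  have hleft : ∀ x ∈ domSet n, alphaFun (starf n) (alphaFun n x) = x := by
    intro x hx
    obtain ⟨g, hg, rfl⟩ := (mem_domSet_iff hn).mp hx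
    rw [alphaFun_eq hn hg, alphaFun_starf_eq hn hg]
  have hright : ∀ y ∈ ranSet n, alphaFun n (alphaFun (starf n) y) = y := by
    intro y hy
    obtain ⟨g, hg, rfl⟩ := (mem_ranSet_iff hn).mp hy
    rw [alphaFun_starf_eq hn hg, alphaFun_eq hn hg]
  have hmaps : Set.MapsTo (alphaFun n) (domSet n) (ranSet n) := by
    intro x hx
    obtain ⟨g, hg, rfl⟩ := (mem_domSet_iff hn).mp hx
    exact (mem_ranSet_iff hn).mpr ⟨g, hg, (alphaFun_eq hn hg).symm⟩
  have hmaps' : Set.MapsTo (alphaFun (starf n)) (ranSet n) (domSet n) := by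
    intro y hy
    obtain ⟨g, hg, rfl⟩ := (mem_ranSet_iff hn).mp hy
    exact (mem_domSet_iff hn).mpr ⟨g, hg, (alphaFun_starf_eq hn hg).symm⟩
  refine ⟨Set.InvOn.bijOn ⟨hleft, hright⟩ hmaps hmaps', ranSet_eq_domSet_starf n,
    hn.continuousOn_alphaFun, ?_, hleft, hright⟩
  rw [ranSet_eq_domSet_starf]
  exact hn.starf.continuousOn_alphaFun

open LPA in
/-- `α_n` is a homeomorphism of `dom(n)` onto `ran(n) = dom(n^*)` with inverse `α_{n^*}`. -/
theorem alpha_homeo {G : DirGraph} (hrf : RowFinite G) (hns : NoSources G)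
    {R : Type} [CommRing R] [IsDomain R] [StarRing R]
    (n : GTrip G → R) (hn : IsNormalizer n) :
    Set.BijOn (alphaFun n) (domSet n) (ranSet n) ∧
      ranSet n = domSet (starf n) ∧
      ContinuousOn (alphaFun n) (domSet n) ∧
      ContinuousOn (alphaFun (starf n)) (ranSet n) ∧
      (∀ x ∈ domSet n, alphaFun (starf n) (alphaFun n x) = x) ∧
      (∀ y ∈ ranSet n, alphaFun n (alphaFun (starf n) y) = y) :=
  alpha_homeo_general n hn
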